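/- Equality of the two fixed-point sequences: with W^0 = Alt^0 = {(t,ℕ)} ∪ {(v,∅) | v ≠ t}, W^{i+1} = W^i ⊔ Pred(⌊W^i⌋) and Alt^{i+1} = Alt^i ⊔ PredAlt(Alt^i) (where ⊔ takes maximal elements of the union, Pred uses the constrained-predecessor operator, and PredAlt uses the alternative operator), one has W^i = Alt^i for all i ∈ ℕ. The key steps are: PredAlt(S) and PredAlt(⌊S⌋) have the same maximal elements, and Pred(⌊S⌋) = PredAlt(⌊S⌋) for downward-closed inputs. -/
import Mathlib


/-- `(v,K) ⪯ (v',K')` iff same vertex and smaller knowledge. -/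
def pleP {V : Type*} (p q : V × Set ℕ) : Prop := p.1 = q.1 ∧ p.2 ⊆ q.2

/-- Maximal elements of a set of pairs. -/
def maxEltsP {V : Type*} (S : Set (V × Set ℕ)) : Set (V × Set ℕ) :=
  {p ∈ S | ¬ ∃ q ∈ S, pleP p q ∧ p ≠ q}

/-- Downward closure. -/
def expandP {V : Type*} (S : Set (V × Set ℕ)) : Set (V × Set ℕ) :=
  {p | ∃ q ∈ S, pleP p q}

/-- `∇(v, a, V')`. -/
def nablaI {V A : Type*} (nab : V → A → V → Set ℕ) (v : V) (a : A)
    (V' : Set V) : Set ℕ :=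
  (⋂ v' ∈ V', nab v a v') \ (⋃ v' ∈ V'ᶜ, nab v a v')

/-- The constrained-predecessor operator. -/
def PredOp {V A : Type*} (nab : V → A → V → Set ℕ)
    (S : Set (V × Set ℕ)) : Set (V × Set ℕ) :=
  {p | ∃ a : A, (∃ v', nab p.1 a v' ≠ ∅) ∧
    ∀ v', (v', p.2 ∩ nab p.1 a v') ∈ S}

/-- The alternative predecessor operator. -/
def PredAltOp {V A : Type*} (nab : V → A → V → Set ℕ)
    (S : Set (V × Set ℕ)) : Set (V × Set ℕ) :=
  {p | ∃ a : A, (∃ v', nab p.1 a v' ≠ ∅) ∧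
    ∃ g : V → Set ℕ, (∀ v', (v', g v') ∈ S) ∧
      p.2 = ⋃ V' : Set V, nablaI nab p.1 a V' ∩ ⋂ v' ∈ V', g v'}

/-- The fixed-point sequence `W^i`. -/
def Wseq {V A : Type*} (nab : V → A → V → Set ℕ) (t : V) :
    ℕ → Set (V × Set ℕ)
  | 0 => {(t, Set.univ)} ∪ {p | p.1 ≠ t ∧ p.2 = ∅}
  | i + 1 => maxEltsP (Wseq nab t i ∪ PredOp nab (expandP (Wseq nab t i)))

/-- The alternative fixed-point sequence `Alt^i`. -/
def AltSeq {V A : Type*} (nab : V → A → V → Set ℕ) (t : V) :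
    ℕ → Set (V × Set ℕ)
  | 0 => {(t, Set.univ)} ∪ {p | p.1 ≠ t ∧ p.2 = ∅}
  | i + 1 => maxEltsP (AltSeq nab t i ∪ PredAltOp nab (AltSeq nab t i))


lemma pleP_refl {V : Type*} (p : V × Set ℕ) : pleP p p := ⟨rfl, subset_rfl⟩

lemma pleP_trans {V : Type*} {p q r : V × Set ℕ} (h1 : pleP p q) (h2 : pleP q r) : pleP p r :=
  ⟨h1.1.trans h2.1, h1.2.trans h2.2⟩

lemma pleP_antisymm {V : Type*} {p q : V × Set ℕ} (h1 : pleP p q) (h2 : pleP q p) : p = q :=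
  Prod.ext h1.1 (subset_antisymm h1.2 h2.2)

lemma subset_expandP {V : Type*} (S : Set (V × Set ℕ)) : S ⊆ expandP S :=
  fun p hp => ⟨p, hp, pleP_refl p⟩

lemma expandP_mono {V : Type*} {S T : Set (V × Set ℕ)} (h : S ⊆ T) :
    expandP S ⊆ expandP T := fun _ ⟨q, hq, hle⟩ => ⟨q, h hq, hle⟩

lemma maxEltsP_eq {V : Type*} {X Y : Set (V × Set ℕ)} (hXY : X ⊆ Y)
    (hYX : Y ⊆ expandP X) : maxEltsP X = maxEltsP Y := by
  ext p
  constructor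
  · rintro ⟨hpX, hmax⟩
    refine ⟨hXY hpX, ?_⟩
    rintro ⟨q, hqY, hle, hne⟩
    obtain ⟨r, hrX, hler⟩ := hYX hqY
    have hpr : pleP p r := pleP_trans hle hler
    rcases eq_or_ne p r with rfl | hner
    · exact hne (pleP_antisymm hle hler)
    · exact hmax ⟨r, hrX, hpr, hner⟩
  · rintro ⟨hpY, hmax⟩
    obtain ⟨r, hrX, hler⟩ := hYX hpY
    have hpr : p = r := by
      by_contra hne
      exact hmax ⟨r, hXY hrX, hler, hne⟩
    subst hpr
    exact ⟨hrX, fun ⟨q, hqX, hle, hne⟩ => hmax ⟨q, hXY hqX, hle, hne⟩⟩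

lemma predAltOp_mono {V A : Type*} (nab : V → A → V → Set ℕ)
    {S T : Set (V × Set ℕ)} (h : S ⊆ T) : PredAltOp nab S ⊆ PredAltOp nab T := by
  rintro p ⟨a, hen, g, hg, hK⟩
  exact ⟨a, hen, g, fun v' => h (hg v'), hK⟩

lemma union_expr_mono {V A : Type*} (nab : V → A → V → Set ℕ) (v : V) (a : A)
    {g g' : V → Set ℕ} (h : ∀ v', g v' ⊆ g' v') :
    (⋃ V' : Set V, nablaI nab v a V' ∩ ⋂ v' ∈ V', g v') ⊆
    (⋃ V' : Set V, nablaI nab v a V' ∩ ⋂ v' ∈ V', g' v') := by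
  refine Set.iUnion_mono fun V' => Set.inter_subset_inter subset_rfl ?_
  exact Set.iInter₂_mono fun v' _ => h v'

lemma predAltOp_expand_sub {V A : Type*} (nab : V → A → V → Set ℕ)
    (S : Set (V × Set ℕ)) :
    PredAltOp nab (expandP S) ⊆ expandP (PredAltOp nab S) := by
  rintro ⟨v, K⟩ ⟨a, hen, g, hg, hK⟩
  have hch : ∀ v' : V, ∃ K', (v', K') ∈ S ∧ g v' ⊆ K' := by
    intro v'
    obtain ⟨q, hqS, hq1, hq2⟩ := hg v'
    refine ⟨q.2, ?_, hq2⟩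
    have : ((v' : V), q.2) = q := Prod.ext hq1 rfl
    rwa [this]
  choose g' hg'S hg'le using hch
  refine ⟨(v, ⋃ V' : Set V, nablaI nab v a V' ∩ ⋂ v' ∈ V', g' v'), ?_, rfl, ?_⟩
  · exact ⟨a, hen, g', hg'S, rfl⟩
  · show K ⊆ _
    rw [show K = _ from hK]
    exact union_expr_mono nab v a hg'le

lemma key_union {V A : Type*} (nab : V → A → V → Set ℕ) (v : V) (a : A)
    (hc : (⋃ v', nab v a v') = Set.univ) (K : Set ℕ) :
    K = ⋃ V' : Set V, nablaI nab v a V' ∩ ⋂ v' ∈ V', (K ∩ nab v a v') := by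
  ext n
  simp only [Set.mem_iUnion, Set.mem_inter_iff, Set.mem_iInter, nablaI, Set.mem_diff,
    Set.mem_compl_iff]
  constructor
  · intro hn
    refine ⟨{v' | n ∈ nab v a v'}, ⟨⟨fun v' hv' => hv', ?_⟩, fun v' hv' => ⟨hn, hv'⟩⟩⟩
    rintro ⟨v', hv', hn'⟩
    exact hv' hn'
  · rintro ⟨V', ⟨⟨hin, hout⟩, hK⟩⟩
    have hne : V'.Nonempty := by
      by_contra hemp
      rw [Set.not_nonempty_iff_eq_empty] at hemp
      subst hemp
      have : n ∈ ⋃ v', nab v a v' := by rw [hc]; trivial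
      simp only [Set.mem_iUnion] at this
      obtain ⟨v', hv'⟩ := this
      exact hout ⟨v', Set.notMem_empty v', hv'⟩
    obtain ⟨v', hv'⟩ := hne
    exact (hK v' hv').1

lemma mem_nablaI_mem {V A : Type*} {nab : V → A → V → Set ℕ} {v : V} {a : A}
    {V' : Set V} {n : ℕ} {v' : V} (h : n ∈ nablaI nab v a V')
    (hn : n ∈ nab v a v') : v' ∈ V' := by
  by_contra hv'
  exact h.2 (Set.mem_biUnion hv' hn)

lemma pred_eq_predAlt {V A : Type*} (nab : V → A → V → Set ℕ)
    (hcomplete : ∀ (v : V) (a : A), (∃ v', nab v a v' ≠ ∅) →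
      (⋃ v', nab v a v') = Set.univ)
    (S : Set (V × Set ℕ)) :
    PredOp nab (expandP S) = PredAltOp nab (expandP S) := by
  ext ⟨v, K⟩
  constructor
  · rintro ⟨a, hen, hall⟩
    exact ⟨a, hen, fun v' => K ∩ nab v a v', hall,
      key_union nab v a (hcomplete v a hen) K⟩
  · rintro ⟨a, hen, g, hg, hK⟩
    refine ⟨a, hen, fun v' => ?_⟩
    obtain ⟨q, hqS, hq1, hq2⟩ := hg v'
    refine ⟨q, hqS, hq1, ?_⟩
    refine subset_trans ?_ hq2
    intro n ⟨hnK, hnab⟩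
    rw [show K = _ from hK] at hnK
    simp only [Set.mem_iUnion, Set.mem_inter_iff] at hnK
    obtain ⟨V', hnbl, hiter⟩ := hnK
    have hv' : v' ∈ V' := mem_nablaI_mem hnbl hnab
    exact Set.mem_iInter₂.1 hiter v' hv'

theorem stmt_17 {V A : Type*} [Fintype V] (nab : V → A → V → Set ℕ) (t : V)
    (hcomplete : ∀ (v : V) (a : A), (∃ v', nab v a v' ≠ ∅) →
      (⋃ v', nab v a v') = Set.univ) :
    ∀ i : ℕ, Wseq nab t i = AltSeq nab t i := by
  intro i
  induction i with
  | zero => rfl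
  | succ i ih =>
    show maxEltsP (Wseq nab t i ∪ PredOp nab (expandP (Wseq nab t i)))
      = maxEltsP (AltSeq nab t i ∪ PredAltOp nab (AltSeq nab t i))
    rw [ih, pred_eq_predAlt nab hcomplete]
    symm
    apply maxEltsP_eq
    · exact Set.union_subset_union subset_rfl (predAltOp_mono nab (subset_expandP _))
    · apply Set.union_subset
      · exact (subset_expandP _).trans (expandP_mono Set.subset_union_left)
      · exact (predAltOp_expand_sub nab _).trans (expandP_mono Set.subset_union_right)
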